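/- arXiv:2403.18429 — 2 statements merged into one kernel-verified Lean document; each statement's English description precedes it below -/
import Mathlib

section
/- There exists a finite simple connected graph G with at least two vertices such that μ(G) > max over all vertices v of G of the fourth root of (5·d_v⁴ + 11·m_v⁴). (This disproves conjectured vertex-maximum bound 17 of Brankov, Hansen and Stevanović.) -/
noncomputable section

open Finset

/-- The degree of a vertex, as a real number. -/
def degR {V : Type*} [Fintype V] (G : SimpleGraph V) (v : V) : ℝ :=
  letI := Classical.decRel G.Adj
  (G.degree v : ℝ)

/-- The average degree of the neighbours of a vertex, as a real number:
`m_v = (∑_{u ~ v} d_u) / d_v`. -/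
def avgDegR {V : Type*} [Fintype V] (G : SimpleGraph V) (v : V) : ℝ :=
  letI := Classical.decRel G.Adj
  (∑ u ∈ G.neighborFinset v, (G.degree u : ℝ)) / (G.degree v : ℝ)

/-- The largest eigenvalue of the Laplacian matrix `L = D - A` of a finite graph. -/
def lapSpecRad {V : Type*} [Fintype V] [DecidableEq V] [Nonempty V]
    (G : SimpleGraph V) : ℝ :=
  letI := Classical.decRel G.Adj
  ⨆ i, (SimpleGraph.posSemidef_lapMatrix ℝ G).isHermitian.eigenvalues i

/-!
The counterexample is `K₄,₄` in which the four vertices of each side are split into two pairs and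
each pair is joined by a path of length two through a new vertex. Its eight vertices of degree 5
have `m_v = 22/5` and its four vertices of degree 2 have `m_v = 5`, so the bound stays below
`9.23`, while `μ = (11 + √57)/2 ≈ 9.275`. It suffices to exhibit one Rayleigh quotient above the
bound: an integer test vector gives `3784/408 ≈ 9.2745`.
-/

open Matrix
open scoped RealInnerProductSpace

theorem Matrix.IsHermitian.dotProduct_mulVec_le_iSup_eigenvalues_mul {n : Type*} [Fintype n]
    [DecidableEq n] {A : Matrix n n ℝ} (hA : A.IsHermitian) (x : n → ℝ) :
    x ⬝ᵥ A *ᵥ x ≤ (⨆ i, hA.eigenvalues i) * (x ⬝ᵥ x) := by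
  set b := hA.eigenvectorBasis
  set y : EuclideanSpace ℝ n := WithLp.toLp 2 x
  set T := toEuclideanLin A
  have term_eq : ∀ i, ⟪y, b i⟫ * ⟪b i, T y⟫ = hA.eigenvalues i * ⟪y, b i⟫ ^ 2 := by
    intro i
    have eigen_b : T (b i) = hA.eigenvalues i • b i := by
      ext1; simp [T, toLpLin_apply, b, hA.mulVec_eigenvectorBasis]
    rw [← (isSymmetric_toEuclideanLin_iff.mpr hA) (b i) y, eigen_b, real_inner_smul_left,
      real_inner_comm y]
    ring
  have h_le : ∀ i, hA.eigenvalues i ≤ ⨆ i, hA.eigenvalues i :=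
    le_ciSup (Set.finite_range _).bddAbove
  calc x ⬝ᵥ A *ᵥ x = ⟪y, T y⟫ := by
        simp [y, T, EuclideanSpace.inner_eq_star_dotProduct, dotProduct_comm]
    _ = ∑ i, hA.eigenvalues i * ⟪y, b i⟫ ^ 2 := by
      rw [← b.sum_inner_mul_inner]
      exact Finset.sum_congr rfl fun i _ => term_eq i
    _ ≤ ∑ i, (⨆ i, hA.eigenvalues i) * ⟪y, b i⟫ ^ 2 := by gcongr with i; exact h_le i
    _ = (⨆ i, hA.eigenvalues i) * (x ⬝ᵥ x) := by
      rw [← Finset.mul_sum, b.sum_sq_inner_left, EuclideanSpace.real_norm_sq_eq]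
      simp [y, dotProduct, sq]

namespace SimpleGraph

variable {V : Type*} [Fintype V] (G : SimpleGraph V) [DecidableRel G.Adj]

theorem lapMatrix_map_intCast [DecidableEq V] (R : Type*) [Ring R] :
    (G.lapMatrix ℤ).map (Int.cast : ℤ → R) = G.lapMatrix R := by
  ext i j
  by_cases h : i = j <;> by_cases hij : G.Adj i j <;> simp [lapMatrix, degMatrix, h, hij]

theorem intCast_dotProduct_lapMatrix_mulVec [DecidableEq V] (R : Type*) [Ring R] (x : V → ℤ) :
    ((x ⬝ᵥ G.lapMatrix ℤ *ᵥ x : ℤ) : R) =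
      (Int.cast ∘ x) ⬝ᵥ G.lapMatrix R *ᵥ (Int.cast ∘ x) := by
  rw [← G.lapMatrix_map_intCast R, ← eq_intCast (Int.castRingHom R), RingHom.map_dotProduct]
  congr 1
  ext v
  exact RingHom.map_mulVec _ _ _ v

theorem degR_eq (v : V) : degR G v = G.degree v := by
  unfold degR; congr!

theorem avgDegR_eq (v : V) :
    avgDegR G v = (∑ u ∈ G.neighborFinset v, (G.degree u : ℝ)) / G.degree v := by
  unfold avgDegR; congr!

theorem dotProduct_lapMatrix_mulVec_le_lapSpecRad_mul [DecidableEq V] [Nonempty V] (x : V → ℝ) :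
    x ⬝ᵥ G.lapMatrix ℝ *ᵥ x ≤ lapSpecRad G * (x ⬝ᵥ x) := by
  unfold lapSpecRad
  convert (posSemidef_lapMatrix ℝ G).isHermitian.dotProduct_mulVec_le_iSup_eigenvalues_mul x

end SimpleGraph

theorem Real.rpow_inv_natCast_lt_of_lt_pow {x y : ℝ} {n : ℕ} (hx : 0 ≤ x) (hy : 0 ≤ y)
    (hn : n ≠ 0) (h : x < y ^ n) : x ^ (n⁻¹ : ℝ) < y := by
  rwa [Real.rpow_inv_lt_iff_of_pos hx hy (by positivity), Real.rpow_natCast]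

namespace Counterexample

/-- `inl (s, p, k)` is vertex `k` of pair `p` on side `s` of `K₄,₄`; `inr (s, p)` is the vertex
subdividing pair `p` on side `s`. -/
abbrev Vertex := (Fin 2 × Fin 2 × Fin 2) ⊕ (Fin 2 × Fin 2)

def Adj : Vertex → Vertex → Prop
  | .inl (s, _, _), .inl (t, _, _) => s ≠ t
  | .inl (s, p, _), .inr h => h = (s, p)
  | .inr h, .inl (s, p, _) => h = (s, p)
  | .inr _, .inr _ => False

instance : DecidableRel Adj
  | .inl (s, _, _), .inl (t, _, _) => inferInstanceAs (Decidable (s ≠ t))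
  | .inl (s, p, _), .inr h => inferInstanceAs (Decidable (h = (s, p)))
  | .inr h, .inl (s, p, _) => inferInstanceAs (Decidable (h = (s, p)))
  | .inr _, .inr _ => inferInstanceAs (Decidable False)

def graph : SimpleGraph Vertex where
  Adj := Adj
  symm := ⟨by decide⟩
  loopless := ⟨by decide⟩

instance : DecidableRel graph.Adj := inferInstanceAs (DecidableRel Adj)

theorem graph_connected : graph.Connected := by
  let r : Vertex := .inl (0, 0, 0)
  have r_adj : graph.Adj r (.inl (1, 0, 0)) := by decide
  have reachable_core : ∀ c, graph.Reachable r (.inl c) := by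
    intro c
    have : graph.Adj r (.inl c) ∨ graph.Adj (.inl (1, 0, 0)) (.inl c) := by revert c; decide
    rcases this with h | h
    exacts [h.reachable, r_adj.reachable.trans h.reachable]
  refine (graph.connected_iff_exists_forall_reachable).2 ⟨r, ?_⟩
  rintro (c | ⟨s, p⟩)
  · exact reachable_core c
  · have hub_adj : graph.Adj (.inl (s, p, 0)) (.inr (s, p)) := rfl
    exact (reachable_core (s, p, 0)).trans hub_adj.reachable

theorem degree_graph (v : Vertex) : graph.degree v = if v.isLeft then 5 else 2 := by
  revert v; decide

theorem sum_degree_neighborFinset_graph (v : Vertex) :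
    ∑ u ∈ graph.neighborFinset v, graph.degree u = if v.isLeft then 22 else 10 := by
  revert v; decide

/-- Constant on the four vertex classes and odd under exchanging the sides, like the eigenvector
of `μ = (11 + √57)/2`, whose hub-to-core ratio `-2/(μ - 2) ≈ -0.275` is approximated by `-2/7`. -/
def testVector : Vertex → ℤ
  | .inl (s, _, _) => if s = 0 then -7 else 7
  | .inr (s, _) => if s = 0 then 2 else -2

theorem le_lapSpecRad_graph : (3784 / 408 : ℝ) ≤ lapSpecRad graph := by
  have quadratic : testVector ⬝ᵥ graph.lapMatrix ℤ *ᵥ testVector = 3784 := by decide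
  have norm_sq : testVector ⬝ᵥ testVector = 408 := by decide
  have h := graph.dotProduct_lapMatrix_mulVec_le_lapSpecRad_mul (Int.cast ∘ testVector)
  have cast_norm_sq : ((testVector ⬝ᵥ testVector : ℤ) : ℝ) =
      (Int.cast ∘ testVector) ⬝ᵥ (Int.cast ∘ testVector) :=
    (Int.castRingHom ℝ).map_dotProduct _ _
  rw [← graph.intCast_dotProduct_lapMatrix_mulVec, ← cast_norm_sq, quadratic, norm_sq] at h
  norm_num at h
  linarith

end Counterexample

open Counterexample

/-- There exists a finite simple connected graph `G` with at least two vertices whose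
Laplacian spectral radius exceeds the conjectured vertex-maximum bound. -/
theorem exists_counterexample_bound17 :
    ∃ (V : Type) (_ : Fintype V) (_ : DecidableEq V) (_ : Nonempty V)
      (G : SimpleGraph V), G.Connected ∧ 2 ≤ Fintype.card V ∧
      ∀ v : V, (fun d m => (5 * d ^ 4 + 11 * m ^ 4) ^ ((1 : ℝ) / 4)) (degR G v) (avgDegR G v) < lapSpecRad G := by
  refine ⟨Vertex, inferInstance, inferInstance, inferInstance, graph, graph_connected, by decide,
    fun v => ?_⟩
  have bound : ∀ d m : ℝ, 5 * d ^ 4 + 11 * m ^ 4 < (3784 / 408) ^ 4 →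
      (5 * d ^ 4 + 11 * m ^ 4) ^ ((1 : ℝ) / 4) < lapSpecRad graph := fun d m h => by
    rw [show (1 : ℝ) / 4 = ((4 : ℕ) : ℝ)⁻¹ by norm_num]
    exact (Real.rpow_inv_natCast_lt_of_lt_pow (by positivity) (by norm_num) (by norm_num) h
      ).trans_le le_lapSpecRad_graph
  rw [graph.degR_eq, graph.avgDegR_eq, ← Nat.cast_sum, sum_degree_neighborFinset_graph,
    degree_graph]
  rcases v with c | h
  · exact bound _ _ (by norm_num)
  · exact bound _ _ (by norm_num)
end
end

section
/- There exists a finite simple connected graph G with at least two vertices such that μ(G) > max over all vertices v of G of √(m_v² + 3·m_v³/d_v). (This disproves conjectured vertex-maximum bound 29 of Brankov, Hansen and Stevanović.) -/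
noncomputable section

open Finset

/-!
The counterexample is the windmill graph: a hub joined to every vertex of three disjoint copies
of `K₅`. A vertex `c` adjacent to all others gives `L e_c = n e_c - 𝟙`, and since `L 𝟙 = 0` the
vector `n e_c - 𝟙` is an eigenvector for `n`; so `μ = 16` here. The hub has `d = 15`, `m = 5`
and bound `√50`, while a blade vertex has `d = 5`, `m = 7` and bound `√254.8 < 16`.
-/

open SimpleGraph Matrix

theorem Matrix.IsHermitian.le_iSup_eigenvalues_of_mulVec_eq_smul {n : Type*} [Fintype n]
    [DecidableEq n] {A : Matrix n n ℝ} (hA : A.IsHermitian) {x : n → ℝ} (hx : x ≠ 0) {α : ℝ}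
    (h : A *ᵥ x = α • x) : α ≤ ⨆ i, hA.eigenvalues i := by
  have hα : α ∈ spectrum ℝ A := by
    rw [← AlgEquiv.spectrum_eq Matrix.toLinAlgEquiv' A]
    exact (Module.End.hasEigenvalue_of_hasEigenvector
      ⟨Module.End.mem_eigenspace_iff.mpr h, hx⟩).mem_spectrum
  obtain ⟨i, rfl⟩ := hA.spectrum_real_eq_range_eigenvalues ▸ hα
  exact le_ciSup (Set.finite_range _).bddAbove i

namespace SimpleGraph

theorem IsUniversal.connected {V : Type*} {G : SimpleGraph V} {c : V} (hc : G.IsUniversal c) :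
    G.Connected := by
  refine (connected_iff_exists_forall_reachable G).2 ⟨c, fun v ↦ ?_⟩
  rcases eq_or_ne c v with rfl | hv
  · rfl
  · exact (hc hv).reachable

variable {V : Type*} [Fintype V] (G : SimpleGraph V)

theorem degR_eq_degree [DecidableRel G.Adj] (v : V) : degR G v = G.degree v := by
  unfold degR
  congr!

theorem avgDegR_eq_sum_div_degree [DecidableRel G.Adj] (v : V) :
    avgDegR G v = (∑ u ∈ G.neighborFinset v, G.degree u : ℕ) / G.degree v := by
  unfold avgDegR
  push_cast
  congr!

variable {G} [DecidableEq V] {c : V}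

theorem IsUniversal.lapMatrix_mulVec_single [DecidableRel G.Adj] (hc : G.IsUniversal c) :
    G.lapMatrix ℝ *ᵥ Pi.single c 1 = (Fintype.card V : ℝ) • Pi.single c 1 - fun _ ↦ 1 := by
  funext v
  rw [lapMatrix_mulVec_apply, Finset.sum_pi_single']
  rcases eq_or_ne c v with rfl | hv
  · rw [(G.degree_eq_card_sub_one c).2 hc, Nat.cast_pred (Fintype.card_pos_iff.2 ⟨c⟩)]
    simp
  · simp [hv.symm, (hc hv).symm]

theorem IsUniversal.lapMatrix_mulVec_card_smul_single_sub_one [DecidableRel G.Adj]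
    (hc : G.IsUniversal c) :
    G.lapMatrix ℝ *ᵥ ((Fintype.card V : ℝ) • Pi.single c 1 - fun _ ↦ 1) =
      (Fintype.card V : ℝ) • ((Fintype.card V : ℝ) • Pi.single c 1 - fun _ ↦ 1) := by
  rw [mulVec_sub, mulVec_smul, hc.lapMatrix_mulVec_single, lapMatrix_mulVec_const_eq_zero,
    sub_zero]

theorem IsUniversal.card_le_lapSpecRad [Nontrivial V] (hc : G.IsUniversal c) :
    (Fintype.card V : ℝ) ≤ lapSpecRad G := by
  classical
  obtain ⟨v, hv⟩ := exists_ne c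
  refine (posSemidef_lapMatrix ℝ G).isHermitian.le_iSup_eigenvalues_of_mulVec_eq_smul
    (fun hx ↦ ?_) hc.lapMatrix_mulVec_card_smul_single_sub_one
  simpa [hv] using congrFun hx v

end SimpleGraph

def windmill (k m : ℕ) : SimpleGraph (Option (Fin k × Fin m)) where
  Adj x y := x ≠ y ∧ (x = none ∨ y = none ∨ x.map Prod.fst = y.map Prod.fst)
  symm := ⟨fun _ _ h ↦ ⟨h.1.symm, by rcases h.2 with h | h | h <;> simp [h]⟩⟩
  loopless := ⟨fun _ h ↦ h.1 rfl⟩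

instance (k m : ℕ) : DecidableRel (windmill k m).Adj := fun x y ↦
  inferInstanceAs (Decidable (x ≠ y ∧ (x = none ∨ y = none ∨ x.map Prod.fst = y.map Prod.fst)))

theorem windmill_isUniversal_none (k m : ℕ) : (windmill k m).IsUniversal none :=
  fun _ hv ↦ ⟨hv, .inl rfl⟩

theorem windmill_three_five_degree (v : Option (Fin 3 × Fin 5)) :
    (windmill 3 5).degree v = if v = none then 15 else 5 := by
  revert v; decide

theorem windmill_three_five_sum_degree_neighborFinset (v : Option (Fin 3 × Fin 5)) :
    ∑ u ∈ (windmill 3 5).neighborFinset v, (windmill 3 5).degree u =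
      if v = none then 75 else 35 := by
  revert v; decide

/-- There exists a finite simple connected graph `G` with at least two vertices whose
Laplacian spectral radius exceeds the conjectured vertex-maximum bound. -/
theorem exists_counterexample_bound29 :
    ∃ (V : Type) (_ : Fintype V) (_ : DecidableEq V) (_ : Nonempty V)
      (G : SimpleGraph V), G.Connected ∧ 2 ≤ Fintype.card V ∧
      ∀ v : V, (fun d m => Real.sqrt (m ^ 2 + 3 * m ^ 3 / d)) (degR G v) (avgDegR G v) < lapSpecRad G := by
  have hc := windmill_isUniversal_none 3 5
  refine ⟨_, inferInstance, inferInstance, inferInstance, windmill 3 5, hc.connected,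
    by decide, fun v ↦ ?_⟩
  have hμ : (16 : ℝ) ≤ lapSpecRad (windmill 3 5) := by simpa using hc.card_le_lapSpecRad
  refine lt_of_lt_of_le ?_ hμ
  rw [Real.sqrt_lt' (by norm_num), degR_eq_degree, avgDegR_eq_sum_div_degree,
    windmill_three_five_degree, windmill_three_five_sum_degree_neighborFinset]
  split_ifs <;> norm_num
end
end
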